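/- Let Ω ⊆ ℝ² be open connected, u : Ω → ℝ continuous satisfying the Harnack-type property for both u and −u (nonnegativity of ±u on B(x,3r) ⊆ Ω implies sup_{B(x,r)} (±u) ≤ C inf_{B(x,r)} (±u)). Let D be the maximal open subset of Ω on which u vanishes, and suppose D ≠ ∅ and D ≠ Ω. Then for every x ∈ ∂D ∩ Ω and every δ > 0 with clos(B(x,δ)) ⊆ Ω, the set B(x, δ) \ clos(D) cannot consist only of points where u > 0, nor only of points where u < 0. -/

import Mathlib

/-!
If `u` had a single sign on `B(x, δ) \ clos(D)`, then, since `u` vanishes on `clos(D)` by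
continuity, it would have that sign on the whole ball. The Harnack inequality on `B(x, δ/3)`,
which contains points of `D` because `x ∈ clos(D)`, then forces `u ≡ 0` on `B(x, δ/3)`, so this
ball lies in `D` and `x` is an interior point of `D`, not a boundary point.
-/

open Metric Set

def vanishingSet {X : Type*} [PseudoMetricSpace X] (Ω : Set X) (u : X → ℝ) : Set X :=
  ⋃₀ {B | ∃ (c : X) (r : ℝ), 0 < r ∧ B = ball c r ∧ B ⊆ Ω ∧ ∀ x ∈ B, u x = 0}

section VanishingSet

variable {X : Type*} [PseudoMetricSpace X] {Ω : Set X} {u : X → ℝ}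

theorem eq_zero_of_mem_vanishingSet {z : X} (hz : z ∈ vanishingSet Ω u) : u z = 0 := by
  obtain ⟨_, ⟨_, _, _, rfl, _, hu⟩, hzB⟩ := hz
  exact hu z hzB

theorem ball_subset_vanishingSet {c : X} {r : ℝ} (hr : 0 < r) (hΩ : ball c r ⊆ Ω)
    (hu : ∀ z ∈ ball c r, u z = 0) : ball c r ⊆ vanishingSet Ω u :=
  subset_sUnion_of_mem ⟨c, r, hr, rfl, hΩ, hu⟩

@[simp]
theorem vanishingSet_neg : vanishingSet Ω (-u) = vanishingSet Ω u := by
  simp only [vanishingSet, Pi.neg_apply, neg_eq_zero]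

theorem not_forall_pos_of_mem_frontier_vanishingSet {x : X} {δ r C : ℝ}
    (hx : x ∈ frontier (vanishingSet Ω u)) (hr : 0 < r) (hrδ : r ≤ δ) (hΩ : ball x δ ⊆ Ω)
    (hu : ContinuousOn u (ball x δ))
    (harnack : (∀ z ∈ ball x δ, 0 ≤ u z) → ∀ z ∈ ball x r, ∀ w ∈ ball x r, u z ≤ C * u w) :
    ¬ ∀ z ∈ ball x δ \ closure (vanishingSet Ω u), 0 < u z := by
  set D := vanishingSet Ω u
  intro hpos
  have hnonneg : ∀ z ∈ ball x δ, 0 ≤ u z := by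
    intro z hz
    by_cases hzD : z ∈ closure D
    · have hcont : ContinuousWithinAt u D z :=
        (hu.continuousAt (isOpen_ball.mem_nhds hz)).continuousWithinAt
      have : u z ∈ closure ({0} : Set ℝ) :=
        hcont.mem_closure hzD fun y hy => eq_zero_of_mem_vanishingSet hy
      rw [closure_singleton, mem_singleton_iff] at this
      exact this.ge
    · exact (hpos z ⟨hz, hzD⟩).le
  obtain ⟨w, hwD, hxw⟩ := mem_closure_iff.1 (frontier_subset_closure hx) r hr
  have hw : w ∈ ball x r := mem_ball_comm.1 hxw
  have hball : ball x r ⊆ ball x δ := ball_subset_ball hrδ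
  have hzero : ∀ z ∈ ball x r, u z = 0 := fun z hz => le_antisymm
    (by simpa [eq_zero_of_mem_vanishingSet hwD] using harnack hnonneg z hz w hw)
    (hnonneg z (hball hz))
  have hxint : x ∈ interior D := interior_maximal
    (ball_subset_vanishingSet hr (hball.trans hΩ) hzero) isOpen_ball (mem_ball_self hr)
  exact hx.2 hxint

end VanishingSet

theorem frontier_of_vanishing_set_sees_both_signs_general
    (Ω : Set (EuclideanSpace ℝ (Fin 2)))
    (u : EuclideanSpace ℝ (Fin 2) → ℝ) (hu : ContinuousOn u Ω)
    (C : ℝ)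
    (harnack : ∀ (v : EuclideanSpace ℝ (Fin 2) → ℝ), (v = u ∨ v = -u) →
      ∀ (x : EuclideanSpace ℝ (Fin 2)) (r : ℝ), 0 < r →
        Metric.ball x (3 * r) ⊆ Ω →
        (∀ z ∈ Metric.ball x (3 * r), 0 ≤ v z) →
        ∀ z ∈ Metric.ball x r, ∀ w ∈ Metric.ball x r, v z ≤ C * v w)
    (D : Set (EuclideanSpace ℝ (Fin 2)))
    (hD : D = ⋃₀ {B | ∃ (c : EuclideanSpace ℝ (Fin 2)) (r : ℝ), 0 < r ∧
        B = Metric.ball c r ∧ B ⊆ Ω ∧ ∀ x ∈ B, u x = 0}) :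
    ∀ x ∈ frontier D ∩ Ω, ∀ δ > (0 : ℝ),
      closure (Metric.ball x δ) ⊆ Ω →
      ¬ (∀ z ∈ Metric.ball x δ \ closure D, 0 < u z) ∧
      ¬ (∀ z ∈ Metric.ball x δ \ closure D, u z < 0) := by
  rintro x ⟨hx, -⟩ δ hδ hΩ
  replace hD : D = vanishingSet Ω u := hD
  subst hD
  obtain ⟨r, hr, rfl⟩ : ∃ r, 0 < r ∧ δ = 3 * r := ⟨δ / 3, by positivity, by ring⟩
  have hrδ : r ≤ 3 * r := by linarith
  have hballΩ : ball x (3 * r) ⊆ Ω := subset_closure.trans hΩ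
  constructor
  · exact not_forall_pos_of_mem_frontier_vanishingSet hx hr hrδ hballΩ (hu.mono hballΩ)
      (harnack u (Or.inl rfl) x r hr hballΩ)
  · intro hneg
    refine not_forall_pos_of_mem_frontier_vanishingSet (u := -u) (by simpa using hx) hr hrδ
      hballΩ (hu.mono hballΩ).neg (harnack (-u) (Or.inr rfl) x r hr hballΩ) ?_
    simpa using hneg

/-- Near any boundary point of the maximal vanishing set `D`, the set
`B(x, δ) \ clos(D)` cannot consist only of points where `u > 0`, nor only of
points where `u < 0`. -/
theorem frontier_of_vanishing_set_sees_both_signs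
    (Ω : Set (EuclideanSpace ℝ (Fin 2))) (hΩ : IsOpen Ω) (hΩc : IsConnected Ω)
    (u : EuclideanSpace ℝ (Fin 2) → ℝ) (hu : ContinuousOn u Ω)
    (C : ℝ) (hC : 1 ≤ C)
    (harnack : ∀ (v : EuclideanSpace ℝ (Fin 2) → ℝ), (v = u ∨ v = -u) →
      ∀ (x : EuclideanSpace ℝ (Fin 2)) (r : ℝ), 0 < r →
        Metric.ball x (3 * r) ⊆ Ω →
        (∀ z ∈ Metric.ball x (3 * r), 0 ≤ v z) →
        ∀ z ∈ Metric.ball x r, ∀ w ∈ Metric.ball x r, v z ≤ C * v w)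
    (D : Set (EuclideanSpace ℝ (Fin 2)))
    (hD : D = ⋃₀ {B | ∃ (c : EuclideanSpace ℝ (Fin 2)) (r : ℝ), 0 < r ∧
        B = Metric.ball c r ∧ B ⊆ Ω ∧ ∀ x ∈ B, u x = 0})
    (hDne : D.Nonempty) (hDprop : D ≠ Ω) :
    ∀ x ∈ frontier D ∩ Ω, ∀ δ > (0 : ℝ),
      closure (Metric.ball x δ) ⊆ Ω →
      ¬ (∀ z ∈ Metric.ball x δ \ closure D, 0 < u z) ∧
      ¬ (∀ z ∈ Metric.ball x δ \ closure D, u z < 0) :=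
  frontier_of_vanishing_set_sees_both_signs_general Ω u hu C harnack D hD
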